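/- arXiv:2602.10835 — 4 statements merged into one kernel-verified Lean document; each statement's English description precedes it below -/
import Mathlib

section
/- Consider a finite control system with transition f : Fin M → Fin N → Fin N and output h : Fin N → Fin P, a reference output trajectory y_r : Fin T → Fin P with T ≥ 1, and the forward sets α(t) defined by α(0) = {x : h x = y_r 0}, α(t+1) = {x : h x = y_r (t+1) ∧ ∃ i x', x' ∈ α(t) ∧ f i x' = x}. Define the backward sets β(t) by β(T-1) = α(T-1) and β(t) = α(t) ∩ {x : ∃ i, f i x ∈ β(t+1)} for t < T-1. Then x ∈ β(t) if and only if there exists a full compatible state trajectory x₀,...,x_{T-1} (each consecutive pair connected by some input, and h(x_s) = y_r s for all s) with x_t = x. -/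
theorem stmt_3 {N M P T : ℕ} (hT : 1 ≤ T)
    (f : Fin M → Fin N → Fin N) (h : Fin N → Fin P)
    (yr : Fin T → Fin P)
    (α β : Fin T → Set (Fin N))
    (hα0 : ∀ h0 : 0 < T, α ⟨0, h0⟩ = {x : Fin N | h x = yr ⟨0, h0⟩})
    (hαs : ∀ (t : ℕ) (ht : t + 1 < T),
      α ⟨t + 1, ht⟩ = {x : Fin N | h x = yr ⟨t + 1, ht⟩ ∧
        ∃ (i : Fin M) (x' : Fin N), x' ∈ α ⟨t, by omega⟩ ∧ f i x' = x})
    (hβT : β ⟨T - 1, by omega⟩ = α ⟨T - 1, by omega⟩)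
    (hβs : ∀ (t : ℕ) (ht : t + 1 < T),
      β ⟨t, by omega⟩ = α ⟨t, by omega⟩ ∩
        {x : Fin N | ∃ i : Fin M, f i x ∈ β ⟨t + 1, ht⟩}) :
    ∀ (t : Fin T) (x : Fin N),
      x ∈ β t ↔
        ∃ z : Fin T → Fin N,
          z t = x ∧
          (∀ s : Fin T, h (z s) = yr s) ∧
          ∀ (s : ℕ) (hs : s + 1 < T),
            ∃ i : Fin M, f i (z ⟨s, by omega⟩) = z ⟨s + 1, hs⟩ := by
  -- α membership implies output match
  have hαmem : ∀ (t : ℕ) (ht : t < T) (x : Fin N),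
      x ∈ α ⟨t, ht⟩ → h x = yr ⟨t, ht⟩ := by
    intro t ht x hx
    cases t with
    | zero => rw [hα0 ht] at hx; exact hx
    | succ n => rw [hαs n ht] at hx; exact hx.1
  -- α characterization via prefix trajectories
  have hαchar : ∀ (t : ℕ) (ht : t < T) (x : Fin N),
      x ∈ α ⟨t, ht⟩ ↔ ∃ w : ℕ → Fin N, w t = x ∧
        (∀ s (hs : s < T), s ≤ t → h (w s) = yr ⟨s, hs⟩) ∧
        (∀ s, s + 1 ≤ t → ∃ i, f i (w s) = w (s + 1)) := by
    intro t
    induction t with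
    | zero =>
      intro ht x
      rw [hα0 ht]
      constructor
      · intro hx
        refine ⟨fun _ => x, rfl, ?_, ?_⟩
        · intro s hs hst
          obtain rfl : s = 0 := Nat.le_zero.mp hst
          exact hx
        · intro s hs; omega
      · rintro ⟨w, hw, hout, -⟩
        show h x = yr ⟨0, ht⟩
        rw [← hw]; exact hout 0 ht le_rfl
    | succ n ih =>
      intro ht x
      rw [hαs n ht]
      constructor
      · rintro ⟨hx, i, x', hx', hfx⟩
        obtain ⟨w, hw, hout, htr⟩ := (ih (by omega) x').mp hx'
        refine ⟨fun s => if s ≤ n then w s else x, by simp, ?_, ?_⟩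
        · intro s hs hst
          by_cases hsn : s ≤ n
          · simp only [if_pos hsn]; exact hout s hs hsn
          · obtain rfl : s = n + 1 := by omega
            simp only [if_neg hsn]; exact hx
        · intro s hs1
          by_cases hsn : s + 1 ≤ n
          · simp only [if_pos hsn, if_pos (by omega : s ≤ n)]
            exact htr s hsn
          · obtain rfl : s = n := by omega
            refine ⟨i, ?_⟩
            simp only [if_pos le_rfl, if_neg (by omega : ¬ s + 1 ≤ s)]
            rw [hw]; exact hfx
      · rintro ⟨w, hw, hout, htr⟩
        have hx : h x = yr ⟨n + 1, ht⟩ := by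
          rw [← hw]; exact hout (n + 1) ht le_rfl
        obtain ⟨i, hfi⟩ := htr n le_rfl
        refine ⟨hx, i, w n, ?_, by rw [hfi, hw]⟩
        exact (ih (by omega) (w n)).mpr
          ⟨w, rfl, fun s hs h1 => hout s hs (by omega), fun s h1 => htr s (by omega)⟩
  -- β characterization via suffix trajectories (downward induction)
  have hβchar : ∀ (k t : ℕ) (ht : t < T), T - 1 - t = k → ∀ x : Fin N,
      (x ∈ β ⟨t, ht⟩ ↔ x ∈ α ⟨t, ht⟩ ∧ ∃ z : ℕ → Fin N, z t = x ∧
        (∀ s (hs : s < T), t ≤ s → h (z s) = yr ⟨s, hs⟩) ∧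
        (∀ s, t ≤ s → s + 1 < T → ∃ i, f i (z s) = z (s + 1))) := by
    intro k
    induction k with
    | zero =>
      intro t ht hk x
      obtain rfl : t = T - 1 := by omega
      rw [hβT]
      constructor
      · intro hx
        refine ⟨hx, fun _ => x, rfl, ?_, ?_⟩
        · intro s hs hts
          obtain rfl : s = T - 1 := by omega
          exact hαmem _ ht x hx
        · intro s hts hs1; omega
      · exact fun hx => hx.1
    | succ k ih =>
      intro t ht hk x
      have ht1 : t + 1 < T := by omega
      rw [hβs t ht1]
      constructor
      · rintro ⟨hxα, i, hfx⟩
        obtain ⟨hfα, z, hz, hout, htr⟩ := (ih (t + 1) ht1 (by omega) (f i x)).mp hfx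
        refine ⟨hxα, fun s => if s ≤ t then x else z s, by simp, ?_, ?_⟩
        · intro s hs hts
          by_cases hst : s ≤ t
          · obtain rfl : s = t := le_antisymm hst hts
            simp only [if_pos le_rfl]
            exact hαmem _ _ x hxα
          · simp only [if_neg hst]
            exact hout s hs (by omega)
        · intro s hts hs1
          by_cases hst : s = t
          · subst hst
            refine ⟨i, ?_⟩
            simp only [if_pos le_rfl, if_neg (by omega : ¬ s + 1 ≤ s)]
            exact hz.symm
          · simp only [if_neg (by omega : ¬ s ≤ t), if_neg (by omega : ¬ s + 1 ≤ t)]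
            exact htr s (by omega) hs1
      · rintro ⟨hxα, z, hz, hout, htr⟩
        refine ⟨hxα, ?_⟩
        obtain ⟨i, hfi⟩ := htr t le_rfl ht1
        rw [hz] at hfi
        refine ⟨i, ?_⟩
        rw [hfi]
        apply (ih (t + 1) ht1 (by omega) (z (t + 1))).mpr
        refine ⟨?_, z, rfl, fun s hs h1 => hout s hs (by omega),
          fun s h1 h2 => htr s (by omega) h2⟩
        rw [hαs t ht1]
        exact ⟨hout (t + 1) ht1 (by omega), i, x, hxα, hfi⟩
  -- combine
  intro t x
  have H := hβchar (T - 1 - ↑t) ↑t t.isLt rfl x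
  constructor
  · intro hx
    obtain ⟨hxα, z, hz, hzout, hztr⟩ := H.mp hx
    obtain ⟨w, hw, hwout, hwtr⟩ := (hαchar ↑t t.isLt x).mp hxα
    refine ⟨fun s => if (s : ℕ) ≤ (t : ℕ) then w ↑s else z ↑s, ?_, ?_, ?_⟩
    · simp only [if_pos le_rfl]; exact hw
    · intro s
      by_cases hst : (s : ℕ) ≤ (t : ℕ)
      · simp only [if_pos hst]; exact hwout ↑s s.isLt hst
      · simp only [if_neg hst]; exact hzout ↑s s.isLt (by omega)
    · intro s hs1
      by_cases hsa : s + 1 ≤ (t : ℕ)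
      · refine (hwtr s hsa).imp fun i hi => ?_
        simp only [if_pos hsa, if_pos (by omega : s ≤ (t : ℕ))]
        exact hi
      · by_cases hsb : s = (t : ℕ)
        · obtain ⟨i, hi⟩ := hztr s (by omega) hs1
          refine ⟨i, ?_⟩
          simp only [if_pos (by omega : s ≤ (t : ℕ)), if_neg hsa]
          subst hsb
          rw [hw]
          rw [hz] at hi
          exact hi
        · obtain ⟨i, hi⟩ := hztr s (by omega) hs1
          refine ⟨i, ?_⟩
          simp only [if_neg (by omega : ¬ s ≤ (t : ℕ)), if_neg hsa]
          exact hi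
  · rintro ⟨Z, hZ, hZout, hZtr⟩
    apply H.mpr
    set z : ℕ → Fin N := fun s => if hs : s < T then Z ⟨s, hs⟩ else x with hzdef
    have hzeq : ∀ (s : ℕ) (hs : s < T), z s = Z ⟨s, hs⟩ := by
      intro s hs; simp only [hzdef, dif_pos hs]
    have hzt : z ↑t = x := by rw [hzeq ↑t t.isLt]; exact hZ
    constructor
    · exact (hαchar ↑t t.isLt x).mpr
        ⟨z, hzt, fun s hs h1 => by rw [hzeq s hs]; exact hZout ⟨s, hs⟩,
          fun s h1 => by
            have hs1 : s + 1 < T := by omega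
            rw [hzeq s (by omega), hzeq (s + 1) hs1]
            exact hZtr s hs1⟩
    · exact ⟨z, hzt, fun s hs h1 => by rw [hzeq s hs]; exact hZout ⟨s, hs⟩,
        fun s h1 hs1 => by
          rw [hzeq s (by omega), hzeq (s + 1) hs1]
          exact hZtr s hs1⟩
end

section
/- Consider a finite control system with transition f : Fin M → Fin N → Fin N and output h : Fin N → Fin P, and a T-periodic reference output trajectory y_r : ℕ → Fin P (i.e., y_r (t+T) = y_r t for all t), with T ≥ 1. Then the following are equivalent: (i) for every initial state x₀ there exists an infinite input sequence u : ℕ → Fin M such that the resulting infinite trajectory from x₀ satisfies h (x(t)) = y_r(t) for all t ≥ 1; (ii) for every initial state x₀ there exists a finite input sequence u : Fin T → Fin M such that the resulting trajectory from x₀ satisfies h (x(t)) = y_r(t) for all t ∈ [1, T]. -/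
/-!
Tracking one period from an arbitrary initial state can be repeated indefinitely: the state
reached at the end of a period is again an admissible initial state, and by periodicity of the
reference the next period asks for the same outputs. Gluing the single-period inputs chosen at the
successive period-start states gives one infinite input that tracks the whole reference.
-/

/-- The state trajectory produced by input sequence `u` from initial state `x₀`. -/
def traj {N M : ℕ} (f : Fin M → Fin N → Fin N) (u : ℕ → Fin M) (x₀ : Fin N) : ℕ → Fin N
  | 0 => x₀
  | t + 1 => f (u t) (traj f u x₀ t)

open Function

section Trajectory

variable {N M : ℕ} (f : Fin M → Fin N → Fin N)

theorem traj_add (u : ℕ → Fin M) (x₀ : Fin N) (s r : ℕ) :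
    traj f u x₀ (s + r) = traj f (fun t => u (s + t)) (traj f u x₀ s) r := by
  induction r with
  | zero => rfl
  | succ r ih =>
    show f (u (s + r)) (traj f u x₀ (s + r)) = f (u (s + r)) (traj f _ _ r)
    rw [ih]

theorem traj_congr {u v : ℕ → Fin M} (x₀ : Fin N) {r : ℕ} (huv : ∀ t < r, u t = v t) :
    traj f u x₀ r = traj f v x₀ r := by
  induction r with
  | zero => rfl
  | succ r ih =>
    show f (u r) (traj f u x₀ r) = f (v r) (traj f v x₀ r)
    rw [huv r r.lt_succ_self, ih fun t ht => huv t (ht.trans r.lt_succ_self)]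

theorem traj_eq_of_step {T : ℕ} {u : ℕ → Fin M} {x : Fin (T + 1) → Fin N}
    (hstep : ∀ t : Fin T, x t.succ = f (u t) (x t.castSucc)) (t : Fin (T + 1)) :
    traj f u (x 0) t = x t := by
  induction t using Fin.induction with
  | zero => rfl
  | succ t ih => rw [Fin.val_succ, traj, hstep, ← ih]; rfl

theorem exists_run_iff_exists_traj {P T : ℕ} (hT : 0 < T) (h : Fin N → Fin P)
    (yr : ℕ → Fin P) (x₀ : Fin N) :
    (∃ (u : Fin T → Fin M) (x : Fin (T + 1) → Fin N),
        x 0 = x₀ ∧ (∀ t : Fin T, x t.succ = f (u t) (x t.castSucc)) ∧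
        ∀ t : Fin T, h (x t.succ) = yr ((t : ℕ) + 1)) ↔
      ∃ u : ℕ → Fin M, ∀ t < T, h (traj f u x₀ (t + 1)) = yr (t + 1) := by
  constructor
  · rintro ⟨u, x, rfl, hstep, hout⟩
    set v : ℕ → Fin M := fun t => u ⟨t % T, Nat.mod_lt _ hT⟩
    have hstep' : ∀ t : Fin T, x t.succ = f (v t) (x t.castSucc) := by
      intro t
      simp only [v, Nat.mod_eq_of_lt t.isLt, hstep]
    refine ⟨v, fun t ht => ?_⟩
    exact (congrArg h (traj_eq_of_step f hstep' (Fin.succ ⟨t, ht⟩))).trans (hout ⟨t, ht⟩)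
  · rintro ⟨u, hu⟩
    exact ⟨fun t => u t, fun t => traj f u x₀ t, rfl, fun t => rfl, fun t => hu t t.isLt⟩

theorem exists_tracking_of_forall_exists_period_tracking {P T : ℕ} (hT : 0 < T)
    (h : Fin N → Fin P) {yr : ℕ → Fin P} (hper : Periodic yr T)
    (H : ∀ x₀, ∃ u : ℕ → Fin M, ∀ t < T, h (traj f u x₀ (t + 1)) = yr (t + 1)) (x₀ : Fin N) :
    ∃ u : ℕ → Fin M, ∀ t, 1 ≤ t → h (traj f u x₀ t) = yr t := by
  choose U hU using H
  set X : ℕ → Fin N := fun k => (fun x => traj f (U x) x T)^[k] x₀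
  set u : ℕ → Fin M := fun t => U (X (t / T)) (t % T)
  have block : ∀ k, traj f u x₀ (T * k) = X k →
      ∀ r ≤ T, traj f u x₀ (T * k + r) = traj f (U (X k)) (X k) r := by
    intro k hk r hr
    rw [traj_add, hk]
    refine traj_congr f _ fun t ht => ?_
    have ht : t < T := ht.trans_le hr
    simp only [u, Nat.mul_add_div hT, Nat.mul_add_mod, Nat.div_eq_of_lt ht, Nat.mod_eq_of_lt ht,
      add_zero]
  have start : ∀ k, traj f u x₀ (T * k) = X k := by
    intro k
    induction k with
    | zero => rfl
    | succ k ih =>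
      rw [Nat.mul_succ, block k ih T le_rfl]
      exact (iterate_succ_apply' (fun x => traj f (U x) x T) k x₀).symm
  refine ⟨u, fun t ht => ?_⟩
  obtain ⟨s, rfl⟩ := Nat.exists_eq_add_of_le' ht
  have hs : s + 1 = T * (s / T) + (s % T + 1) := by rw [← add_assoc, Nat.div_add_mod]
  have hper' : yr (T * (s / T) + (s % T + 1)) = yr (s % T + 1) := by
    rw [add_comm, mul_comm]
    exact_mod_cast hper.nat_mul (s / T) (s % T + 1)
  rw [hs, block _ (start _) _ (Nat.mod_lt _ hT), hU _ _ (Nat.mod_lt _ hT), hper']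

end Trajectory

theorem stmt_5 {N M P T : ℕ} (hT : 1 ≤ T)
    (f : Fin M → Fin N → Fin N) (h : Fin N → Fin P)
    (yr : ℕ → Fin P) (hper : ∀ t, yr (t + T) = yr t) :
    (∀ x₀ : Fin N, ∃ u : ℕ → Fin M,
        ∀ t : ℕ, 1 ≤ t → h (traj f u x₀ t) = yr t) ↔
      (∀ x₀ : Fin N, ∃ (u : Fin T → Fin M) (x : Fin (T + 1) → Fin N),
        x 0 = x₀ ∧ (∀ t : Fin T, x t.succ = f (u t) (x t.castSucc)) ∧
        ∀ t : Fin T, h (x t.succ) = yr ((t : ℕ) + 1)) := by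
  simp_rw [exists_run_iff_exists_traj f hT h yr]
  constructor
  · intro H x₀
    obtain ⟨u, hu⟩ := H x₀
    exact ⟨u, fun t _ => hu (t + 1) (Nat.le_add_left 1 t)⟩
  · exact exists_tracking_of_forall_exists_period_tracking f hT h hper
end

section
/- Consider a finite control system with transition f and output h and a T-periodic reference output y_r : ℕ → Fin P. Suppose there exists a nonempty set X ⊆ Fin N such that for every x ∈ X, h x = y_r 1, and there exist inputs giving states x = x₁, x₂, ..., x_T, x_{T+1} (with x_{s+1} = f (u s) x_s) such that h(x_s) = y_r(s) for all s ∈ [1, T] and x_{T+1} ∈ X. Then for every x ∈ X the periodic output trajectory y_r is trackable starting at time 1 from x. -/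
theorem stmt_12 {N M P T : ℕ} (hT : 1 ≤ T)
    (f : Fin M → Fin N → Fin N) (h : Fin N → Fin P)
    (yr : ℕ → Fin P) (hper : ∀ t, yr (t + T) = yr t)
    (X : Set (Fin N)) (hXne : X.Nonempty)
    (hXout : ∀ x ∈ X, h x = yr 1)
    -- every state of X returns into X after one period, tracking the output meanwhile
    (hXret : ∀ x ∈ X, ∃ z : Fin (T + 1) → Fin N,
      z 0 = x ∧
      (∀ s : Fin T, ∃ i : Fin M, f i (z s.castSucc) = z s.succ) ∧
      (∀ s : Fin T, h (z s.castSucc) = yr ((s : ℕ) + 1)) ∧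
      z (Fin.last T) ∈ X) :
    ∀ x ∈ X, ∃ z : ℕ → Fin N,
      z 1 = x ∧
      (∀ t : ℕ, 1 ≤ t → h (z t) = yr t) ∧
      ∀ t : ℕ, 1 ≤ t → ∃ i : Fin M, f i (z t) = z (t + 1) := by
  classical
  have hTpos : 0 < T := hT
  have hper' : ∀ (k n : ℕ), yr (n + k * T) = yr n := by
    intro k
    induction k with
    | zero => simp
    | succ k ih =>
      intro n
      have e : n + (k + 1) * T = (n + k * T) + T := by ring
      rw [e, hper, ih]
  intro x hx
  let W : {x // x ∈ X} → Fin (T + 1) → Fin N := fun p => (hXret p p.2).choose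
  have Wspec : ∀ p : {x // x ∈ X},
      W p 0 = p.1 ∧
      (∀ s : Fin T, ∃ i : Fin M, f i (W p s.castSucc) = W p s.succ) ∧
      (∀ s : Fin T, h (W p s.castSucc) = yr ((s : ℕ) + 1)) ∧
      W p (Fin.last T) ∈ X := fun p => (hXret p p.2).choose_spec
  let st : ℕ → {x // x ∈ X} :=
    fun k => Nat.rec ⟨x, hx⟩ (fun _ p => ⟨W p (Fin.last T), (Wspec p).2.2.2⟩) k
  have st_succ : ∀ k, (st (k + 1)).1 = W (st k) (Fin.last T) := fun k => rfl
  refine ⟨fun t => W (st ((t - 1) / T))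
      ((⟨(t - 1) % T, Nat.mod_lt _ hTpos⟩ : Fin T).castSucc), ?_, ?_, ?_⟩
  · simp only [Nat.sub_self]
    have h0 : ((⟨0 % T, Nat.mod_lt _ hTpos⟩ : Fin T).castSucc : Fin (T + 1)) = 0 := by
      ext; simp
    rw [Nat.zero_div, h0, (Wspec (st 0)).1]
    rfl
  · intro t ht
    simp only []
    set m := t - 1 with hm
    have hc : T * (m / T) = (m / T) * T := Nat.mul_comm _ _
    have hdm := Nat.div_add_mod m T
    rw [(Wspec (st (m / T))).2.2.1 ⟨m % T, Nat.mod_lt _ hTpos⟩]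
    have e : t = (m % T + 1) + (m / T) * T := by omega
    rw [e, hper']
  · intro t ht
    simp only []
    set m := t - 1 with hm
    set q := m / T with hq
    set r := m % T with hr
    have hrT : r < T := Nat.mod_lt _ hTpos
    have hc : T * q = q * T := Nat.mul_comm _ _
    have hdm : q * T + r = m := by rw [hq, hr, Nat.mul_comm, Nat.div_add_mod]
    have htm : t = T * q + r + 1 := by omega
    obtain ⟨i, hi⟩ := (Wspec (st q)).2.1 ⟨r, hrT⟩
    refine ⟨i, ?_⟩
    have hsub : t + 1 - 1 = t := rfl
    by_cases hcase : r + 1 < T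
    · -- stay within the same block
      have e : t = T * q + (r + 1) := by omega
      have hdiv : t / T = q := by
        rw [e, Nat.mul_add_div hTpos, Nat.div_eq_of_lt hcase]
        rfl
      have hmod : t % T = r + 1 := by
        rw [e, Nat.mul_add_mod, Nat.mod_eq_of_lt hcase]
      have hfin : ((⟨t % T, Nat.mod_lt _ hTpos⟩ : Fin T).castSucc : Fin (T + 1))
          = (⟨r, hrT⟩ : Fin T).succ := by
        ext; simp [hmod]
      rw [hsub, hdiv, hfin, ← hi]
    · -- cross into the next block
      have hrT1 : r + 1 = T := by omega
      have e : t = T * q + T := by omega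
      have hdiv : t / T = q + 1 := by
        rw [e, Nat.mul_add_div hTpos, Nat.div_self hTpos]
      have hmod : t % T = 0 := by
        rw [e, Nat.mul_add_mod, Nat.mod_self]
      have hfin : ((⟨t % T, Nat.mod_lt _ hTpos⟩ : Fin T).castSucc : Fin (T + 1)) = 0 := by
        ext; simp [hmod]
      have hlast : (⟨r, hrT⟩ : Fin T).succ = Fin.last T := by
        ext; simp [hrT1]
      rw [hsub, hdiv, hfin, (Wspec (st (q + 1))).1, st_succ, ← hlast, ← hi]
end

section
/- Consider a finite control system with transition f : Fin M → Fin N → Fin N and output h : Fin N → Fin P and a T-periodic reference output y_r. Suppose the periodic tracking problem is solvable from some state, i.e., the set X₁* of time-1 states of infinite compatible trajectories is nonempty. Then every successor-closed property holds: for every x ∈ X₁* there exist an input i and a state x' ∈ X₁* reachable from x in exactly T steps along a trajectory whose outputs match y_r(1),...,y_r(T) at times 1,...,T (where the trajectory starts at x at time 1). In particular, X₁* contains a state lying on a cycle of length a multiple of T in the transition graph restricted to compatible trajectories. -/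
theorem stmt_14 {N M P T : ℕ} (hT : 1 ≤ T)
    (f : Fin M → Fin N → Fin N) (h : Fin N → Fin P)
    (yr : ℕ → Fin P) (hper : ∀ t, yr (t + T) = yr t)
    (X₁star : Set (Fin N))
    (hX₁ : X₁star = {x₁ : Fin N | ∃ z : ℕ → Fin N,
        z 1 = x₁ ∧ (∀ t : ℕ, 1 ≤ t → h (z t) = yr t) ∧
        ∀ t : ℕ, 1 ≤ t → ∃ i : Fin M, f i (z t) = z (t + 1)})
    (hne : X₁star.Nonempty) :
    -- every state of X₁star has a T-step successor in X₁star along a compatible trajectory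
    (∀ x ∈ X₁star, ∃ x' ∈ X₁star, ∃ z : Fin (T + 1) → Fin N,
        z 0 = x ∧ z (Fin.last T) = x' ∧
        (∀ s : Fin T, ∃ i : Fin M, f i (z s.castSucc) = z s.succ) ∧
        (∀ s : Fin T, h (z s.castSucc) = yr ((s : ℕ) + 1))) ∧
    -- and X₁star contains a state lying on a compatible cycle of length a multiple of T
    (∃ x ∈ X₁star, ∃ k : ℕ, 1 ≤ k ∧ ∃ z : ℕ → Fin N,
        z 1 = x ∧ z (1 + k * T) = x ∧
        (∀ s : ℕ, 1 ≤ s → s < 1 + k * T → ∃ i : Fin M, f i (z s) = z (s + 1)) ∧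
        (∀ s : ℕ, 1 ≤ s → s ≤ k * T → h (z s) = yr s)) := by
  have hyr : ∀ n t, yr (t + n * T) = yr t := by
    intro n
    induction n with
    | zero => simp
    | succ n ih =>
      intro t
      have : t + (n + 1) * T = (t + T) + n * T := by ring
      rw [this, ih, hper]
  subst hX₁
  constructor
  · intro x hx
    obtain ⟨z, hz1, hout, htr⟩ := hx
    refine ⟨z (T + 1), ?_, fun j => z ((j : ℕ) + 1), ?_, ?_, ?_, ?_⟩
    · refine ⟨fun t => z (t + T), by rw [Nat.add_comm], ?_, ?_⟩
      · intro t ht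
        rw [hout _ (by omega), hper]
      · intro t ht
        obtain ⟨i, hi⟩ := htr (t + T) (by omega)
        exact ⟨i, hi.trans (by congr 1; omega)⟩
    · simpa using hz1
    · simp
    · intro s
      obtain ⟨i, hi⟩ := htr ((s : ℕ) + 1) (by omega)
      exact ⟨i, by simpa using hi⟩
    · intro s
      exact hout _ (by omega)
  · obtain ⟨x, hx⟩ := hne
    obtain ⟨z, hz1, hout, htr⟩ := hx
    obtain ⟨n, m, hnm', heq⟩ :=
      Finite.exists_ne_map_eq_of_infinite (fun n : ℕ => z (1 + n * T))
    wlog hnm : n < m generalizing n m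
    · exact this m n (Ne.symm hnm') heq.symm (by omega)
    refine ⟨z (1 + n * T), ?_, m - n, by omega, fun t => z (t + n * T), rfl, ?_, ?_, ?_⟩
    · refine ⟨fun t => z (t + n * T), rfl, ?_, ?_⟩
      · intro t ht
        rw [hout _ (by omega), hyr]
      · intro t ht
        obtain ⟨i, hi⟩ := htr (t + n * T) (by omega)
        exact ⟨i, hi.trans (by congr 1; omega)⟩
    · have he : 1 + (m - n) * T + n * T = 1 + m * T := by
        have : (m - n) * T + n * T = m * T := by
          rw [← Nat.add_mul]; congr 1; omega
        omega
      show z (1 + (m - n) * T + n * T) = z (1 + n * T)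
      rw [he, ← heq]
    · intro s hs _
      obtain ⟨i, hi⟩ := htr (s + n * T) (by omega)
      exact ⟨i, hi.trans (by congr 1; omega)⟩
    · intro s hs _
      rw [hout _ (by omega), hyr]
end
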